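/- In the fixed-design linear model with ε ~ N(0, I_n), if ĥ = Θ̂_j satisfies the KKT-type bound ‖Σ̂Θ̂_j - e_j‖_∞ ≤ λ_j/τ̂_j², with 1/τ̂_j² = Θ̂_{jj} ≤ ‖Θ̂_j‖₂ = O(1), ‖Θ̂_j‖₀ ≤ d_n = o(√n/log p), and λ_j ≍ √(log p/n), then Θ̂_jᵀΣ̂Θ̂_j/Θ̂_{jj} = 1 + o(1). -/
import Mathlib


open Matrix Filter Asymptotics Real Finset

/-- In the fixed-design linear model, if the nodewise-Lasso column `Θ̂ⱼ` satisfies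
the KKT-type bound `‖Σ̂Θ̂ⱼ - eⱼ‖_∞ ≤ λⱼ/τ̂ⱼ²` with `1/τ̂ⱼ² = Θ̂ⱼⱼ ≤ ‖Θ̂ⱼ‖₂ = O(1)`,
`‖Θ̂ⱼ‖₀ ≤ dₙ = o(√n/log p)` and `λⱼ ≍ √(log p/n)`, then
`Θ̂ⱼᵀΣ̂Θ̂ⱼ/Θ̂ⱼⱼ = 1 + o(1)`. -/

theorem stmt19
    (p d : ℕ → ℕ)
    (Shat : ∀ n, Matrix (Fin (p n)) (Fin (p n)) ℝ)
    (Th : ∀ n : ℕ, Fin (p n) → ℝ)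
    (j : ∀ n : ℕ, Fin (p n))
    (lam : ℕ → ℝ)
    (hjj : ∀ n, 0 < Th n (j n))
    (hkkt : ∀ n, ∀ i, |(Shat n).mulVec (Th n) i - (if i = j n then 1 else 0)|
      ≤ lam n * Th n (j n))
    (hjle : ∀ n, Th n (j n) ≤ Real.sqrt (Th n ⬝ᵥ Th n))
    (hl2 : ∃ C : ℝ, ∀ n, Real.sqrt (Th n ⬝ᵥ Th n) ≤ C)
    (hsupp : ∀ n, (Finset.univ.filter fun i => Th n i ≠ 0).card ≤ d n)
    (hd : (fun n : ℕ => (d n : ℝ))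
      =o[atTop] (fun n : ℕ => Real.sqrt n / Real.log (p n)))
    (hlam : ∃ c₁ c₂ : ℝ, 0 < c₁ ∧ ∀ᶠ n in atTop,
      c₁ * Real.sqrt (Real.log (p n) / n) ≤ lam n ∧
        lam n ≤ c₂ * Real.sqrt (Real.log (p n) / n)) :
    Tendsto (fun n => (Th n ⬝ᵥ (Shat n).mulVec (Th n)) / Th n (j n) - 1)
      atTop (nhds 0) := by
  obtain ⟨C, hC⟩ := hl2
  obtain ⟨c₁, c₂, hc₁, hlam'⟩ := hlam
  have hC0 : 0 ≤ C := le_trans (Real.sqrt_nonneg _) (hC 0)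
  -- lambda is nonnegative
  have hlamnn : ∀ n, 0 ≤ lam n := by
    intro n
    have h := (abs_nonneg _).trans (hkkt n (j n))
    exact nonneg_of_mul_nonneg_right (by rwa [mul_comm] at h) (hjj n)
  -- the support is nonempty, so d n ≥ 1
  have hd1 : ∀ n, 1 ≤ (d n : ℝ) := by
    intro n
    have hcard : 0 < (Finset.univ.filter fun i => Th n i ≠ 0).card :=
      Finset.card_pos.mpr ⟨j n, by simp [(hjj n).ne']⟩
    have := lt_of_lt_of_le hcard (hsupp n)
    exact_mod_cast this
  -- eventually log p n > 0
  have hlogpos : ∀ᶠ n in atTop, 0 < Real.log (p n) := by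
    filter_upwards [hd.def one_pos] with n hn
    rcases (Real.log_natCast_nonneg (p n)).lt_or_eq with h | h
    · exact h
    · exfalso
      rw [← h] at hn
      simp only [div_zero, norm_zero, mul_zero, Real.norm_eq_abs,
        abs_of_nonneg (by positivity : (0:ℝ) ≤ (d n : ℝ))] at hn
      linarith [hd1 n]
  -- the L1-norm bound
  have hL1 : ∀ n, ∑ i, |Th n i| ≤ Real.sqrt (d n) * C := by
    intro n
    set S := Finset.univ.filter fun i => Th n i ≠ 0 with hS
    have h0 : ∑ i, |Th n i| = ∑ i ∈ S, |Th n i| := by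
      rw [hS]
      exact (Finset.sum_filter_of_ne (by intro x _ hx; simpa using hx)).symm
    have hsq : (∑ i ∈ S, |Th n i|) ^ 2 ≤ S.card * ∑ i ∈ S, |Th n i| ^ 2 :=
      sq_sum_le_card_mul_sum_sq
    have h2 : ∑ i ∈ S, |Th n i| ^ 2 ≤ Th n ⬝ᵥ Th n := by
      simp only [sq_abs, dotProduct, ← sq]
      exact Finset.sum_le_sum_of_subset_of_nonneg (Finset.subset_univ S)
        (fun i _ _ => sq_nonneg _)
    have h3 : (∑ i ∈ S, |Th n i|) ^ 2 ≤ (d n) * (Th n ⬝ᵥ Th n) := by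
      calc (∑ i ∈ S, |Th n i|) ^ 2 ≤ S.card * ∑ i ∈ S, |Th n i| ^ 2 := hsq
        _ ≤ (d n : ℝ) * (Th n ⬝ᵥ Th n) := by
            have hdotnn : 0 ≤ Th n ⬝ᵥ Th n :=
              Finset.sum_nonneg fun i _ => mul_self_nonneg _
            have hc : (S.card : ℝ) ≤ (d n : ℝ) := by exact_mod_cast hsupp n
            exact mul_le_mul hc h2 (Finset.sum_nonneg fun i _ => sq_nonneg _) (by positivity)
    have h4 : ∑ i ∈ S, |Th n i| ≤ Real.sqrt ((d n) * (Th n ⬝ᵥ Th n)) := by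
      have := Real.sqrt_le_sqrt h3
      rwa [Real.sqrt_sq (Finset.sum_nonneg fun i _ => abs_nonneg _)] at this
    have h5 : Real.sqrt ((d n) * (Th n ⬝ᵥ Th n)) = Real.sqrt (d n) * Real.sqrt (Th n ⬝ᵥ Th n) :=
      Real.sqrt_mul (by positivity) _
    rw [h0]
    calc ∑ i ∈ S, |Th n i| ≤ Real.sqrt (d n) * Real.sqrt (Th n ⬝ᵥ Th n) := by rw [← h5]; exact h4
      _ ≤ Real.sqrt (d n) * C := by
          exact mul_le_mul_of_nonneg_left (hC n) (Real.sqrt_nonneg _)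
  -- pointwise bound: |f n| ≤ (√(d n) * C) * lam n
  have hptw : ∀ n, |(Th n ⬝ᵥ (Shat n).mulVec (Th n)) / Th n (j n) - 1|
      ≤ (Real.sqrt (d n) * C) * lam n := by
    intro n
    have ha := hjj n
    have key : |(Th n ⬝ᵥ (Shat n).mulVec (Th n)) - Th n (j n)|
        ≤ (∑ i, |Th n i|) * (lam n * Th n (j n)) := by
      have heq : (Th n ⬝ᵥ (Shat n).mulVec (Th n)) - Th n (j n)
          = ∑ i, Th n i * ((Shat n).mulVec (Th n) i - (if i = j n then 1 else 0)) := by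
        simp only [mul_sub, Finset.sum_sub_distrib, dotProduct, mul_ite, mul_one, mul_zero]
        rw [Finset.sum_ite_eq' Finset.univ (j n) (Th n)]
        simp
      rw [heq]
      calc |∑ i, Th n i * ((Shat n).mulVec (Th n) i - (if i = j n then 1 else 0))|
          ≤ ∑ i, |Th n i * ((Shat n).mulVec (Th n) i - (if i = j n then 1 else 0))| :=
            Finset.abs_sum_le_sum_abs _ _
        _ ≤ ∑ i, |Th n i| * (lam n * Th n (j n)) := by
            refine Finset.sum_le_sum fun i _ => ?_
            rw [abs_mul]
            exact mul_le_mul_of_nonneg_left (hkkt n i) (abs_nonneg _)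
        _ = (∑ i, |Th n i|) * (lam n * Th n (j n)) := by rw [Finset.sum_mul]
    have hdiv : |(Th n ⬝ᵥ (Shat n).mulVec (Th n)) / Th n (j n) - 1|
        = |(Th n ⬝ᵥ (Shat n).mulVec (Th n)) - Th n (j n)| / Th n (j n) := by
      have heq0 : (Th n ⬝ᵥ (Shat n).mulVec (Th n)) / Th n (j n) - 1
          = ((Th n ⬝ᵥ (Shat n).mulVec (Th n)) - Th n (j n)) / Th n (j n) := by
        field_simp
      rw [heq0, abs_div, abs_of_pos ha]
    rw [hdiv]
    rw [div_le_iff₀ ha]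
    calc |(Th n ⬝ᵥ (Shat n).mulVec (Th n)) - Th n (j n)|
        ≤ (∑ i, |Th n i|) * (lam n * Th n (j n)) := key
      _ ≤ (Real.sqrt (d n) * C) * (lam n * Th n (j n)) := by
          refine mul_le_mul_of_nonneg_right (hL1 n) ?_
          exact mul_nonneg (hlamnn n) ha.le
      _ = (Real.sqrt (d n) * C) * lam n * Th n (j n) := by ring
  -- the majorant tends to zero
  have hmaj : Tendsto (fun n => C * c₂ * Real.sqrt ((d n) * (Real.log (p n) / n)))
      atTop (nhds 0) := by
    have h0 : Tendsto (fun n : ℕ => (d n : ℝ) * (Real.log (p n) / n)) atTop (nhds 0) := by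
      rw [NormedAddCommGroup.tendsto_nhds_zero]
      intro ε hε
      filter_upwards [hd.def (half_pos hε), hlogpos, eventually_ge_atTop 1] with n hn hlog hn1
      have hn1' : (1:ℝ) ≤ (n:ℝ) := by exact_mod_cast hn1
      have hnpos : (0:ℝ) < n := by linarith
      have hsn : (1:ℝ) ≤ Real.sqrt n := by
        rw [show (1:ℝ) = Real.sqrt 1 by simp]; exact Real.sqrt_le_sqrt hn1'
      have hbd : (d n : ℝ) ≤ (ε/2) * (Real.sqrt n / Real.log (p n)) := by
        rw [Real.norm_eq_abs, Real.norm_eq_abs, abs_of_nonneg (by positivity),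
          abs_of_nonneg (by positivity)] at hn
        exact hn
      have hnn : 0 ≤ Real.log (p n) / (n:ℝ) := by positivity
      have step : (d n : ℝ) * (Real.log (p n) / n)
          ≤ ((ε/2) * (Real.sqrt n / Real.log (p n))) * (Real.log (p n) / n) :=
        mul_le_mul_of_nonneg_right hbd hnn
      have heq2 : ((ε/2) * (Real.sqrt n / Real.log (p n))) * (Real.log (p n) / n)
          = (ε/2) * (Real.sqrt n / n) := by
        field_simp
      have hfrac : Real.sqrt n / (n:ℝ) ≤ 1 := by
        rw [Real.sqrt_div_self']
        rw [div_le_one (by linarith)]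
        linarith
      have : (d n : ℝ) * (Real.log (p n) / n) ≤ ε/2 := by
        calc (d n : ℝ) * (Real.log (p n) / n) ≤ (ε/2) * (Real.sqrt n / n) := by
              rw [← heq2]; exact step
          _ ≤ (ε/2) * 1 := mul_le_mul_of_nonneg_left hfrac (by linarith)
          _ = ε/2 := mul_one _
      rw [Real.norm_eq_abs, abs_of_nonneg (by positivity)]
      linarith
    have h1 : Tendsto (fun n : ℕ => Real.sqrt ((d n) * (Real.log (p n) / n)))
        atTop (nhds 0) := by
      have := (Real.continuous_sqrt.tendsto' 0 0 (by simp)).comp h0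
      exact this
    have := h1.const_mul (C * c₂)
    simpa using this
  -- squeeze
  refine squeeze_zero_norm' ?_ hmaj
  filter_upwards [hlam', hlogpos, eventually_ge_atTop 1] with n hl hlog hn1
  have hn1' : (1:ℝ) ≤ (n:ℝ) := by exact_mod_cast hn1
  have hnpos : (0:ℝ) < n := by linarith
  calc ‖(Th n ⬝ᵥ (Shat n).mulVec (Th n)) / Th n (j n) - 1‖
      ≤ (Real.sqrt (d n) * C) * lam n := hptw n
    _ ≤ (Real.sqrt (d n) * C) * (c₂ * Real.sqrt (Real.log (p n) / n)) := by
        exact mul_le_mul_of_nonneg_left hl.2 (by positivity)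
    _ = C * c₂ * (Real.sqrt (d n) * Real.sqrt (Real.log (p n) / n)) := by ring
    _ = C * c₂ * Real.sqrt ((d n) * (Real.log (p n) / n)) := by
        rw [← Real.sqrt_mul (by positivity)]
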